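/- Let β be a Hermitian matrix on ℂ^{n+1} with largest eigenvalue c_r attained on eigenspace V_r, and f([z]) = ⟨βz,z⟩/|z|² the Rayleigh quotient on ℙⁿ(ℂ). Then the unstable set {[z] : lim_{t→+∞} f([exp(tβ)z]) = c_r} equals the complement of the linear subspace ℙ(V₀ ⊕ … ⊕ V_{r-1}), and in particular is open and dense in ℙⁿ(ℂ). -/

import Mathlib

/-!
Split `z = ∑ gᵢ` along the eigenspaces. Then `exp (tβ) z = ∑ e^{t cᵢ} gᵢ`, and since the
eigenspaces are orthogonal the Rayleigh quotient of this vector is the mean of the `cᵢ` with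
weights `e^{2t cᵢ} ‖gᵢ‖²`. If `g_r ≠ 0` the top weight dominates as `t → ∞`, so the mean tends
to `c_r`; if `g_r = 0`, i.e. `z ∈ ℙ(V₀ ⊕ … ⊕ V_{r-1})`, the mean never exceeds `c_{r-1} < c_r`.
That subspace is proper because it is orthogonal to `V_r ≠ 0`, so its complement is open and
dense.
-/

open Filter Topology

theorem NormedSpace.exp_apply_of_apply_eq_smul {E : Type*} [NormedAddCommGroup E]
    [NormedSpace ℂ E] [CompleteSpace E] (A : E →L[ℂ] E) {a : ℂ} {z : E} (h : A z = a • z) :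
    NormedSpace.exp A z = Complex.exp a • z := by
  have hpow : ∀ k : ℕ, (A ^ k) z = a ^ k • z := by
    intro k
    induction k with
    | zero => simp
    | succ k ih =>
      rw [pow_succ']
      change A ((A ^ k) z) = _
      rw [ih, map_smul, h, smul_smul, pow_succ]
  have hA := (NormedSpace.exp_series_hasSum_exp' (𝕂 := ℂ) A).mapL
    (ContinuousLinearMap.apply ℂ E z)
  have ha := (NormedSpace.exp_series_hasSum_exp' (𝕂 := ℂ) a).smul_const z
  rw [← Complex.exp_eq_exp_ℂ] at ha
  refine hA.unique ?_
  simpa [hpow, smul_smul] using ha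

theorem Submodule.exists_sum_eq_of_mem_iSup {R M ι : Type*} [Semiring R] [AddCommMonoid M]
    [Module R M] [Fintype ι] {p : ι → Submodule R M} {z : M} (hz : z ∈ ⨆ i, p i) :
    ∃ g : ι → M, (∀ i, g i ∈ p i) ∧ ∑ i, g i = z := by
  obtain ⟨g, hg, rfl⟩ := (Submodule.mem_iSup_iff_exists_finsupp p z).mp hz
  exact ⟨g, hg, (Finsupp.sum_fintype g (fun _ x => x) fun _ => rfl).symm⟩

section WeightedMean

variable {ι : Type*} [Fintype ι]

theorem tendsto_sum_mul_exp_div_sum_exp (c a : ι → ℝ) {L : ι} (hc : ∀ i ≠ L, c i < c L)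
    (ha : a L ≠ 0) :
    Tendsto (fun s => (∑ i, c i * (Real.exp (s * c i) * a i)) / ∑ i, Real.exp (s * c i) * a i)
      atTop (𝓝 (c L)) := by
  classical
  have hexp : ∀ i, Tendsto (fun s => Real.exp (s * (c i - c L))) atTop
      (𝓝 (if i = L then 1 else 0)) := by
    intro i
    split_ifs with hi
    · simp [hi]
    · exact Real.tendsto_exp_atBot.comp
        (tendsto_id.atTop_mul_const_of_neg (sub_neg.mpr (hc i hi)))
  have hnum : Tendsto (fun s => ∑ i, c i * (Real.exp (s * (c i - c L)) * a i)) atTop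
      (𝓝 (c L * a L)) := by
    simpa using tendsto_finsetSum Finset.univ fun i _ =>
      ((hexp i).mul_const (a i)).const_mul (c i)
  have hden : Tendsto (fun s => ∑ i, Real.exp (s * (c i - c L)) * a i) atTop (𝓝 (a L)) := by
    simpa using tendsto_finsetSum Finset.univ fun i _ => (hexp i).mul_const (a i)
  have hshift : ∀ s i, Real.exp (s * c i) = Real.exp (s * (c i - c L)) * Real.exp (s * c L) :=
    fun s i => by rw [← Real.exp_add]; ring_nf
  refine (mul_div_cancel_right₀ (c L) ha ▸ hnum.div hden ha).congr fun s => ?_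
  rw [Pi.div_apply, ← mul_div_mul_right _ _ (Real.exp_pos (s * c L)).ne', Finset.sum_mul,
    Finset.sum_mul]
  congr 1 <;> refine Finset.sum_congr rfl fun i _ => ?_ <;> rw [hshift s i] <;> ring

theorem sum_mul_exp_div_sum_exp_le {c b : ι → ℝ} {M : ℝ} (hb : ∀ i, 0 ≤ b i)
    (hb' : ∃ i, b i ≠ 0) (hM : ∀ i, c i ≤ M) (s : ℝ) :
    (∑ i, c i * (Real.exp (s * c i) * b i)) / ∑ i, Real.exp (s * c i) * b i ≤ M := by
  obtain ⟨k, hk⟩ := hb'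
  have hpos : 0 < ∑ i, Real.exp (s * c i) * b i :=
    Finset.sum_pos' (fun i _ => by have := hb i; positivity)
      ⟨k, Finset.mem_univ k, mul_pos (Real.exp_pos _) ((hb k).lt_of_ne' hk)⟩
  rw [div_le_iff₀ hpos, Finset.mul_sum]
  exact Finset.sum_le_sum fun i _ =>
    mul_le_mul_of_nonneg_right (hM i) (mul_nonneg (Real.exp_pos _).le (hb i))

end WeightedMean

section Eigenspaces

variable {E ι : Type*} [NormedAddCommGroup E] [InnerProductSpace ℂ E]
  {β : E →L[ℂ] E} {c : ι → ℝ} {V : ι → Submodule ℂ E}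

theorem orthogonalFamily_of_apply_eq_smul (hβ : ∀ z w : E, inner ℂ (β z) w = inner ℂ z (β w))
    (hc : Function.Injective c) (hV : ∀ i, ∀ z ∈ V i, β z = (c i : ℂ) • z) :
    OrthogonalFamily ℂ (fun i => V i) fun i => (V i).subtypeₗᵢ := by
  have hle : ∀ i, V i ≤ Module.End.eigenspace (β : E →ₗ[ℂ] E) (c i) := fun i z hz =>
    Module.End.mem_eigenspace_iff.mpr (hV i z hz)
  have hsym : (β : E →ₗ[ℂ] E).IsSymmetric := hβ
  exact OrthogonalFamily.of_pairwise fun i j hij =>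
    ((hsym.orthogonalFamily_eigenspaces.comp (Complex.ofReal_injective.comp hc)).isOrtho
      hij).mono (hle i) (hle j)

variable [Fintype ι]

theorem rayleighQuotient_sum (hV : ∀ i, ∀ z ∈ V i, β z = (c i : ℂ) • z)
    (hfam : OrthogonalFamily ℂ (fun i => V i) fun i => (V i).subtypeₗᵢ) {w : ι → E}
    (hw : ∀ i, w i ∈ V i) :
    β.rayleighQuotient (∑ i, w i) = (∑ i, c i * ‖w i‖ ^ 2) / ∑ i, ‖w i‖ ^ 2 := by
  have hβw : β (∑ i, w i) = ∑ i, (c i : ℂ) • w i := by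
    rw [map_sum]
    exact Finset.sum_congr rfl fun i _ => hV i _ (hw i)
  have hinner := hfam.inner_sum (fun i => ⟨(c i : ℂ) • w i, (V i).smul_mem _ (hw i)⟩)
    (fun i => ⟨w i, hw i⟩) Finset.univ
  have hnorm := hfam.norm_sum (fun i => ⟨w i, hw i⟩) Finset.univ
  simp only [Submodule.coe_subtypeₗᵢ, Submodule.subtype_apply, Submodule.coe_inner,
    Submodule.coe_norm] at hinner hnorm
  rw [ContinuousLinearMap.rayleighQuotient, ContinuousLinearMap.reApplyInnerSelf_apply, hβw,
    hinner, hnorm, map_sum]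
  congr 1
  refine Finset.sum_congr rfl fun i _ => ?_
  rw [inner_smul_left, Complex.conj_ofReal]
  exact (RCLike.re_ofReal_mul _ _).trans (congrArg _ (inner_self_eq_norm_sq _))

variable [CompleteSpace E]

theorem exp_smul_apply_sum (hV : ∀ i, ∀ z ∈ V i, β z = (c i : ℂ) • z)
    {g : ι → E} (hg : ∀ i, g i ∈ V i) (t : ℝ) :
    NormedSpace.exp ((t : ℂ) • β) (∑ i, g i) = ∑ i, (Real.exp (t * c i) : ℂ) • g i := by
  rw [map_sum]
  refine Finset.sum_congr rfl fun i _ => ?_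
  have htβ : ((t : ℂ) • β) (g i) = ((t * c i : ℝ) : ℂ) • g i := by
    rw [smul_apply, hV i _ (hg i), smul_smul, Complex.ofReal_mul]
  rw [NormedSpace.exp_apply_of_apply_eq_smul _ htβ, ← Complex.ofReal_exp]

theorem rayleighQuotient_exp_smul_sum (hV : ∀ i, ∀ z ∈ V i, β z = (c i : ℂ) • z)
    (hfam : OrthogonalFamily ℂ (fun i => V i) fun i => (V i).subtypeₗᵢ)
    {g : ι → E} (hg : ∀ i, g i ∈ V i) (t : ℝ) :
    β.rayleighQuotient (NormedSpace.exp ((t : ℂ) • β) (∑ i, g i)) =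
      (∑ i, c i * (Real.exp (2 * t * c i) * ‖g i‖ ^ 2)) /
        ∑ i, Real.exp (2 * t * c i) * ‖g i‖ ^ 2 := by
  have hnorm : ∀ i, ‖(Real.exp (t * c i) : ℂ) • g i‖ ^ 2 =
      Real.exp (2 * t * c i) * ‖g i‖ ^ 2 := by
    intro i
    rw [norm_smul, mul_pow, Complex.norm_real, Real.norm_of_nonneg (Real.exp_pos _).le,
      ← Real.exp_nat_mul]
    ring_nf
  rw [exp_smul_apply_sum hV hg, rayleighQuotient_sum hV hfam fun i => (V i).smul_mem _ (hg i)]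
  simp only [hnorm]

theorem tendsto_rayleighQuotient_exp_smul_sum (hV : ∀ i, ∀ z ∈ V i, β z = (c i : ℂ) • z)
    (hfam : OrthogonalFamily ℂ (fun i => V i) fun i => (V i).subtypeₗᵢ)
    {L : ι} (hc : ∀ i ≠ L, c i < c L) {g : ι → E} (hg : ∀ i, g i ∈ V i) (hgL : g L ≠ 0) :
    Tendsto (fun t : ℝ => β.rayleighQuotient (NormedSpace.exp ((t : ℂ) • β) (∑ i, g i)))
      atTop (𝓝 (c L)) := by
  simp only [rayleighQuotient_exp_smul_sum hV hfam hg]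
  exact (tendsto_sum_mul_exp_div_sum_exp c _ hc (by positivity)).comp
    (tendsto_id.const_mul_atTop two_pos)

theorem rayleighQuotient_exp_smul_sum_le (hV : ∀ i, ∀ z ∈ V i, β z = (c i : ℂ) • z)
    (hfam : OrthogonalFamily ℂ (fun i => V i) fun i => (V i).subtypeₗᵢ)
    {M : ℝ} (hM : ∀ i, c i ≤ M) {g : ι → E} (hg : ∀ i, g i ∈ V i) (hg0 : ∑ i, g i ≠ 0)
    (t : ℝ) : β.rayleighQuotient (NormedSpace.exp ((t : ℂ) • β) (∑ i, g i)) ≤ M := by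
  obtain ⟨k, -, hk⟩ := Finset.exists_ne_zero_of_sum_ne_zero hg0
  rw [rayleighQuotient_exp_smul_sum hV hfam hg]
  exact sum_mul_exp_div_sum_exp_le (fun i => by positivity) ⟨k, by positivity⟩ hM _

end Eigenspaces

/-- For a Hermitian `β` on `ℂ^{n+1}` with eigenvalues `c 0 < … < c r`, eigenspaces
`V 0, …, V r` spanning everything, and Rayleigh quotient `f`, the unstable set
`{[z] : lim_{t→∞} f([exp(tβ)z]) = c r}` (described here on the level of nonzero
vectors) is the complement of the linear subspace `ℙ(V₀ ⊕ … ⊕ V_{r-1})`; in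
particular it is open and dense. -/
theorem stmt_16 {n r : ℕ}
    (β : EuclideanSpace ℂ (Fin (n + 1)) →L[ℂ] EuclideanSpace ℂ (Fin (n + 1)))
    (hherm : ∀ z w : EuclideanSpace ℂ (Fin (n + 1)),
      (inner ℂ (β z) w : ℂ) = inner ℂ z (β w))
    (c : Fin (r + 1) → ℝ) (hmono : StrictMono c)
    (V : Fin (r + 1) → Submodule ℂ (EuclideanSpace ℂ (Fin (n + 1))))
    (hV : ∀ i, ∀ z ∈ V i, β z = (c i : ℂ) • z)
    (hspan : (⨆ i, V i) = ⊤) (hVr : V (Fin.last r) ≠ ⊥)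
    (f : EuclideanSpace ℂ (Fin (n + 1)) → ℝ)
    (hf : ∀ z, f z = (inner ℂ (β z) z : ℂ).re / ‖z‖ ^ 2)
    (W : Submodule ℂ (EuclideanSpace ℂ (Fin (n + 1))))
    (hW : W = ⨆ i : Fin r, V i.castSucc) :
    {z : EuclideanSpace ℂ (Fin (n + 1)) | z ≠ 0 ∧
        Tendsto (fun t : ℝ => f (NormedSpace.exp ((t : ℂ) • β) z)) atTop
          (nhds (c (Fin.last r)))} =
      {z : EuclideanSpace ℂ (Fin (n + 1)) | z ≠ 0 ∧ z ∉ W} ∧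
    IsOpen ((W : Set (EuclideanSpace ℂ (Fin (n + 1))))ᶜ) ∧
    Dense ((W : Set (EuclideanSpace ℂ (Fin (n + 1))))ᶜ) := by
  obtain rfl : f = β.rayleighQuotient := funext hf
  have hfam := orthogonalFamily_of_apply_eq_smul hherm hmono.injective hV
  have hWtop : W ≠ ⊤ := by
    have hortho : V (Fin.last r) ⟂ W := hW ▸ Submodule.isOrtho_iSup_right.mpr fun i =>
      hfam.isOrtho (Fin.castSucc_lt_last i).ne'
    exact fun h => hVr (Submodule.isOrtho_top_right.mp (h ▸ hortho))
  refine ⟨Set.ext fun z => and_congr_right fun hz => ⟨fun htends hzW => ?_, fun hzW => ?_⟩,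
    W.closed_of_finiteDimensional.isOpen_compl, interior_eq_empty_iff_dense_compl.mp ?_⟩
  · obtain ⟨g, hg, rfl⟩ := Submodule.exists_sum_eq_of_mem_iSup (hW ▸ hzW)
    cases r with
    | zero => exact hz (Finset.sum_of_isEmpty _)
    | succ k =>
      have hle := rayleighQuotient_exp_smul_sum_le (M := c (Fin.last k).castSucc)
        (fun i => hV i.castSucc) (hfam.comp (f := Fin.castSucc) (Fin.castSucc_injective _))
        (fun i => hmono.monotone (Fin.castSucc_le_castSucc_iff.mpr (Fin.le_last i))) hg hz
      exact (hmono (Fin.castSucc_lt_last (Fin.last k))).not_ge (le_of_tendsto' htends hle)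
  · obtain ⟨g, hg, rfl⟩ := Submodule.exists_sum_eq_of_mem_iSup
      (hspan ▸ Submodule.mem_top : z ∈ ⨆ i, V i)
    refine tendsto_rayleighQuotient_exp_smul_sum hV hfam
      (fun i hi => hmono (Fin.lt_last_iff_ne_last.mpr hi)) hg fun hlast => hzW ?_
    rw [Fin.sum_univ_castSucc, hlast, add_zero, hW]
    exact Submodule.sum_mem _ fun i _ => Submodule.mem_iSup_of_mem i (hg i.castSucc)
  · by_contra hint
    exact hWtop (W.eq_top_of_nonempty_interior' (Set.nonempty_iff_ne_empty.mpr hint))
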